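/- arXiv:1506.08681 — 4 statements merged into one kernel-verified Lean document; each statement's English description precedes it below -/
import Mathlib

section
/- Let f, g : K → L be maps of simplicial sets and suppose there is a homotopy H : K × Δ[1] → L from f to g. Then there is a homotopy 𝐄𝐱 K × Δ[1] → 𝐄𝐱 L from 𝐄𝐱 f to 𝐄𝐱 g; in particular, the functor 𝐄𝐱 preserves simplicial homotopy equivalences. -/
open CategoryTheory CategoryTheory.Limits Simplicial SSet

noncomputable section

/-- Objects of the direct category `D[n]`: pairs `([k], φ)` of a natural number `k` and an
order-preserving map `φ : [k] → [n]`. -/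
structure DObj (n : ℕ) : Type where
  k : ℕ
  φ : Fin (k + 1) →o Fin (n + 1)

/-- Morphisms `([k], φ) → ([k'], φ')` of `D[n]`: injective order-preserving maps
`f : [k] → [k']` with `φ' ∘ f = φ`. -/
@[ext]
structure DHom {n : ℕ} (x y : DObj n) : Type where
  f : Fin (x.k + 1) →o Fin (y.k + 1)
  inj : Function.Injective f
  comm : y.φ.comp f = x.φ

instance DCat (n : ℕ) : Category (DObj n) where
  Hom := DHom
  id x := ⟨OrderHom.id, fun _ _ h => h, rfl⟩
  comp {x y z} g h := ⟨h.f.comp g.f, h.inj.comp g.inj, by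
    change (z.φ.comp h.f).comp g.f = x.φ
    rw [h.comm, g.comm]⟩
  id_comp f := rfl
  comp_id f := rfl
  assoc f g h := rfl

/-- An order-preserving map `θ : [n] → [n']` induces a functor `D[n] ⥤ D[n']` by
postcomposition with `θ`. -/
def Dmap {n n' : ℕ} (θ : Fin (n + 1) →o Fin (n' + 1)) : DObj n ⥤ DObj n' where
  obj x := ⟨x.k, θ.comp x.φ⟩
  map {x y} g := ⟨g.f, g.inj, by
    change θ.comp (y.φ.comp g.f) = θ.comp x.φ
    rw [g.comm]⟩
  map_id _ := rfl
  map_comp _ _ := rfl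

/-- `D` as a cosimplicial category. -/
def Dfunctor : SimplexCategory ⥤ Cat where
  obj a := Cat.of (DObj a.len)
  map θ := (Dmap θ.toOrderHom).toCatHom
  map_id _ := rfl
  map_comp _ _ := rfl

/-- The cosimplicial simplicial set `N D[-]` (`N` is the nerve functor). -/
def ND : SimplexCategory ⥤ SSet := Dfunctor ⋙ nerveFunctor

/-- The fattened `Ex` functor: `(𝐄𝐱 K)_n = Hom(N D[n], K)`, with simplicial operators
acting by precomposition with the maps `N Dθ`. -/
def Ex (K : SSet) : SSet where
  obj m := ND.obj m.unop ⟶ K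
  map θ := TypeCat.ofHom fun g => ND.map θ.unop ≫ g
  map_id m := by
    refine ConcreteCategory.hom_ext _ _ fun g => ?_
    change ND.map (𝟙 m.unop) ≫ g = g
    simp
  map_comp {m m' m''} θ θ' := by
    refine ConcreteCategory.hom_ext _ _ fun g => ?_
    change ND.map (θ'.unop ≫ θ.unop) ≫ g = ND.map θ'.unop ≫ ND.map θ.unop ≫ g
    simp

/-- Functoriality of `𝐄𝐱` in the simplicial set, by postcomposition. -/
def ExMap {K L : SSet} (f : K ⟶ L) : Ex K ⟶ Ex L where
  app m := TypeCat.ofHom fun g => g ≫ f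
  naturality m m' θ := by
    refine ConcreteCategory.hom_ext _ _ fun g => ?_
    change (ND.map θ.unop ≫ g) ≫ f = ND.map θ.unop ≫ g ≫ f
    exact Category.assoc _ _ _

/-- The map `X ⟶ Δ[1]` constant at the vertex `k`. -/
def constΔ1 (X : SSet) (k : Fin 2) : X ⟶ Δ[1] where
  app m := TypeCat.ofHom fun _ => SSet.stdSimplex.const 1 k m
  naturality := by intros; rfl

/-- `H : X ⨯ Δ[1] ⟶ Y` is a (simplicial) homotopy from `a` to `b` if it restricts to `a`
on `X × {0}` and to `b` on `X × {1}`. -/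
def IsHomotopy {X Y : SSet} (H : X ⨯ Δ[1] ⟶ Y) (a b : X ⟶ Y) : Prop :=
  prod.lift (𝟙 X) (constΔ1 X 0) ≫ H = a ∧ prod.lift (𝟙 X) (constΔ1 X 1) ≫ H = b

/-- "There is a homotopy from `a` to `b`". -/
def HtpyRel (X Y : SSet) (a b : X ⟶ Y) : Prop := ∃ H, IsHomotopy H a b

/-! The homotopy on `𝐄𝐱` is `𝐄𝐱 H ∘ (id × η)`. Here `η : X ⟶ 𝐄𝐱 X` sends an `m`-simplex
`Δ[m] ⟶ X` to its composite with the last vertex map `N D[m] ⟶ Δ[m]`, `([k], φ) ↦ φ(k)`, and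
`𝐄𝐱 K × 𝐄𝐱 Δ[1] ⟶ 𝐄𝐱 (K × Δ[1])` exists because `Hom(N D[m], -)` preserves products.
Since `η` sends the two constant simplices of `Δ[1]` to constant maps, the restrictions of this
homotopy to the ends are `𝐄𝐱` of the restrictions of `H`. Homotopy equivalences are then
preserved because `𝐄𝐱` is a functor preserving the homotopy relation. -/

theorem Relation.EqvGen.map {α β : Type*} {r : α → α → Prop} {s : β → β → Prop} (f : α → β)
    (hf : ∀ a b, r a b → s (f a) (f b)) {a b : α} (h : Relation.EqvGen r a b) :
    Relation.EqvGen s (f a) (f b) := by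
  induction h with
  | rel _ _ h => exact .rel _ _ (hf _ _ h)
  | refl _ => exact .refl _
  | symm _ _ _ ih => exact .symm _ _ ih
  | trans _ _ _ _ _ ih₁ ih₂ => exact .trans _ _ _ ih₁ ih₂

def DObj.lastVertex {n : ℕ} (x : DObj n) : Fin (n + 1) := x.φ (Fin.last x.k)

lemma DObj.lastVertex_mono {n : ℕ} {x y : DObj n} (h : x ⟶ y) :
    x.lastVertex ≤ y.lastVertex := by
  rw [DObj.lastVertex, ← h.comm]
  exact y.φ.monotone (Fin.le_last _)

def lastVertexMap (a : SimplexCategory) : ND.obj a ⟶ stdSimplex.obj a where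
  app _ := TypeCat.ofHom fun x => stdSimplex.objMk
    ⟨fun i => (x.obj i).lastVertex, fun _ _ hij => DObj.lastVertex_mono (x.map (homOfLE hij))⟩
  naturality _ _ _ := rfl

lemma lastVertexMap_naturality {a b : SimplexCategory} (θ : b ⟶ a) :
    ND.map θ ≫ lastVertexMap a = lastVertexMap b ≫ SSet.stdSimplex.map θ := rfl

def toEx (X : SSet) : X ⟶ Ex X where
  app m := TypeCat.ofHom fun x => lastVertexMap m.unop ≫ yonedaEquiv.symm x
  naturality m m' θ := by
    refine ConcreteCategory.hom_ext _ _ fun x => ?_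
    change lastVertexMap m'.unop ≫ yonedaEquiv.symm (X.map θ.unop.op x) =
      ND.map θ.unop ≫ lastVertexMap m.unop ≫ yonedaEquiv.symm x
    rw [← yonedaEquiv_symm_naturality_left, ← Category.assoc, ← lastVertexMap_naturality,
      Category.assoc]

lemma exMap_id (K : SSet) : ExMap (𝟙 K) = 𝟙 (Ex K) := rfl

lemma exMap_comp {K L M : SSet} (f : K ⟶ L) (g : L ⟶ M) :
    ExMap (f ≫ g) = ExMap f ≫ ExMap g := by
  ext m x
  exact (Category.assoc x f g).symm

lemma constΔ1_comp_toEx (X : SSet) (k : Fin 2) :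
    constΔ1 (Ex X) k ≫ toEx Δ[1] = ExMap (constΔ1 X k) := rfl

def exProdLift (K L : SSet) : Ex K ⨯ Ex L ⟶ Ex (K ⨯ L) where
  app m := TypeCat.ofHom fun x =>
    prod.lift ((prod.fst : Ex K ⨯ Ex L ⟶ _).app m x) ((prod.snd : Ex K ⨯ Ex L ⟶ _).app m x)
  naturality m m' θ := by
    refine ConcreteCategory.hom_ext _ _ fun x => ?_
    have hfst : (prod.fst : Ex K ⨯ Ex L ⟶ _).app m' ((Ex K ⨯ Ex L).map θ x) =
        ND.map θ.unop ≫ ((prod.fst : Ex K ⨯ Ex L ⟶ _).app m x : ND.obj m.unop ⟶ K) :=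
      NatTrans.naturality_apply (prod.fst : Ex K ⨯ Ex L ⟶ _) θ x
    have hsnd : (prod.snd : Ex K ⨯ Ex L ⟶ _).app m' ((Ex K ⨯ Ex L).map θ x) =
        ND.map θ.unop ≫ ((prod.snd : Ex K ⨯ Ex L ⟶ _).app m x : ND.obj m.unop ⟶ L) :=
      NatTrans.naturality_apply (prod.snd : Ex K ⨯ Ex L ⟶ _) θ x
    exact (congrArg₂ prod.lift hfst hsnd).trans (prod.comp_lift _ _ _).symm

lemma prod_lift_exMap_comp_exProdLift {X K L : SSet} (a : X ⟶ K) (b : X ⟶ L) :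
    prod.lift (ExMap a) (ExMap b) ≫ exProdLift K L = ExMap (prod.lift a b) := by
  ext m x
  have hfst : (prod.fst : Ex K ⨯ Ex L ⟶ _).app m ((prod.lift (ExMap a) (ExMap b)).app m x) =
      x ≫ a :=
    ConcreteCategory.congr_hom (NatTrans.congr_app (prod.lift_fst (ExMap a) (ExMap b)) m) x
  have hsnd : (prod.snd : Ex K ⨯ Ex L ⟶ _).app m ((prod.lift (ExMap a) (ExMap b)).app m x) =
      x ≫ b :=
    ConcreteCategory.congr_hom (NatTrans.congr_app (prod.lift_snd (ExMap a) (ExMap b)) m) x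
  exact (congrArg₂ prod.lift hfst hsnd).trans (prod.comp_lift _ _ _).symm

def exHomotopy {K L : SSet} (H : K ⨯ Δ[1] ⟶ L) : Ex K ⨯ Δ[1] ⟶ Ex L :=
  prod.map (𝟙 (Ex K)) (toEx Δ[1]) ≫ exProdLift K Δ[1] ≫ ExMap H

lemma prod_lift_constΔ1_comp_exHomotopy {K L : SSet} (H : K ⨯ Δ[1] ⟶ L) (k : Fin 2) :
    prod.lift (𝟙 (Ex K)) (constΔ1 (Ex K) k) ≫ exHomotopy H =
      ExMap (prod.lift (𝟙 K) (constΔ1 K k) ≫ H) := by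
  rw [exHomotopy, prod.lift_map_assoc, Category.id_comp, constΔ1_comp_toEx, ← exMap_id,
    ← Category.assoc, prod_lift_exMap_comp_exProdLift, exMap_comp]

lemma IsHomotopy.exMap {K L : SSet} {H : K ⨯ Δ[1] ⟶ L} {f g : K ⟶ L} (h : IsHomotopy H f g) :
    IsHomotopy (exHomotopy H) (ExMap f) (ExMap g) := by
  constructor <;> rw [prod_lift_constΔ1_comp_exHomotopy]
  exacts [congrArg ExMap h.1, congrArg ExMap h.2]

lemma HtpyRel.exMap {K L : SSet} {f g : K ⟶ L} (h : HtpyRel K L f g) :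
    HtpyRel (Ex K) (Ex L) (ExMap f) (ExMap g) := by
  obtain ⟨H, hH⟩ := h
  exact ⟨exHomotopy H, hH.exMap⟩

/-- if `f, g : K ⟶ L` are homotopic maps of simplicial sets, then
`𝐄𝐱 f, 𝐄𝐱 g : 𝐄𝐱 K ⟶ 𝐄𝐱 L` are homotopic; in particular, `𝐄𝐱` preserves simplicial
homotopy equivalences (where "homotopic" is the equivalence relation generated by
`Δ[1]`-homotopies). -/
theorem ex_preserves_homotopies_and_homotopy_equivalences :
    (∀ (K L : SSet) (f g : K ⟶ L) (H : K ⨯ Δ[1] ⟶ L), IsHomotopy H f g →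
      ∃ H' : Ex K ⨯ Δ[1] ⟶ Ex L, IsHomotopy H' (ExMap f) (ExMap g)) ∧
    (∀ (K L : SSet) (f : K ⟶ L),
      (∃ g : L ⟶ K, Relation.EqvGen (HtpyRel K K) (f ≫ g) (𝟙 K) ∧
        Relation.EqvGen (HtpyRel L L) (g ≫ f) (𝟙 L)) →
      ∃ g' : Ex L ⟶ Ex K, Relation.EqvGen (HtpyRel (Ex K) (Ex K)) (ExMap f ≫ g') (𝟙 (Ex K)) ∧
        Relation.EqvGen (HtpyRel (Ex L) (Ex L)) (g' ≫ ExMap f) (𝟙 (Ex L))) := by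
  refine ⟨fun K L f g H hH => ⟨exHomotopy H, hH.exMap⟩,
    fun K L f ⟨g, hgf, hfg⟩ => ⟨ExMap g, ?_, ?_⟩⟩
  · rw [← exMap_comp, ← exMap_id]
    exact hgf.map ExMap fun _ _ => HtpyRel.exMap
  · rw [← exMap_comp, ← exMap_id]
    exact hfg.map ExMap fun _ _ => HtpyRel.exMap

end
end

section
/- For every m ∈ ℕ, the map of simplicial sets N p : N D[m] → Δ[m] induced by the functor p : D[m] → [m] is a simplicial homotopy equivalence: there exists a map g : Δ[m] → N D[m] such that N p ∘ g is homotopic to the identity of Δ[m] and g ∘ N p is homotopic to the identity of N D[m], where 'homotopic' denotes the equivalence relation on maps of simplicial sets generated by Δ[1]-homotopies. -/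
/-
The functor `s : [m] ⥤ D[m]`, `j ↦ ([j], j ↪ m)`, is a section of `p`, so its nerve `g` satisfies
`N p ∘ g = id` on the nose. The other composite `g ∘ N p` is the nerve of `s ∘ p`. A natural
transformation `F ⟶ G` is a functor `[1] × C ⥤ D`, hence yields a `Δ[1]`-homotopy from `N F` to
`N G`, and `s ∘ p` is joined to the identity of `D[m]` by the zigzag
`s ∘ p ⟶ const ([m], id) ⟵ const ([0], m) ⟶ Cone ⟵ id`, where `Cone` appends to `([k], φ)` a
top vertex with value `m`.
-/


open CategoryTheory CategoryTheory.Limits Simplicial SSet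

noncomputable section

/-- The functor `p : D[n] → [n]` on objects: `([k], φ) ↦ φ(k)`. -/
def pObj {n : ℕ} (x : DObj n) : Fin (n + 1) := x.φ (Fin.last x.k)

lemma pObj_le {n : ℕ} {x y : DObj n} (g : x ⟶ y) : pObj x ≤ pObj y := by
  unfold pObj
  rw [← g.comm]
  exact y.φ.monotone (Fin.le_last _)

/-- The map `N p : N D[n] ⟶ Δ[n]`, componentwise. -/
def NpApp {n : ℕ} (m : SimplexCategoryᵒᵖ) (F : (nerve (DObj n)).obj m) : Δ[n].obj m :=
  SSet.stdSimplex.objMk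
    ⟨fun i => pObj (F.obj i), fun _ _ hij => pObj_le (F.map (homOfLE hij))⟩

/-- The map of simplicial sets `N p : N D[n] ⟶ Δ[n]` induced by the functor
`p : D[n] → [n]`, `([k], φ) ↦ φ(k)`. -/
def Np (n : ℕ) : (nerve (DObj n) : SSet) ⟶ Δ[n] where
  app m := TypeCat.ofHom (NpApp m)
  naturality _ _ _ := rfl

lemma CategoryTheory.Functor.const_prod'_comp_uncurry_obj {A J C D : Type*} [Category A]
    [Category J] [Category C] [Category D] (H : A ⥤ C ⥤ D) (a : A) (S : J ⥤ C) :
    ((Functor.const J).obj a).prod' S ⋙ Functor.uncurry.obj H = S ⋙ H.obj a :=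
  Functor.ext (fun _ => rfl) fun _ _ _ => by simp

section NerveHomotopy

variable {C D : Type} [SmallCategory C] [SmallCategory D] {F G : C ⥤ D}

def natTransCylinder (η : F ⟶ G) : Fin 2 × C ⥤ D :=
  Functor.uncurry.obj (ComposableArrows.mk₁ η)

/-- The composite of `(b, a) : X ⟶ Δ[1] × N C` with the nerve of `natTransCylinder η`; taking
`X` arbitrary makes restriction along any `Y ⟶ X` a matter of substitution. -/
def cylinderMap {X : SSet} (η : F ⟶ G) (a : X ⟶ nerve C) (b : X ⟶ Δ[1]) : X ⟶ nerve D where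
  app k := TypeCat.ofHom fun z =>
    (b.app k z).down.toOrderHom.monotone.functor.prod' (a.app k z) ⋙ natTransCylinder η
  naturality k k' σ := by
    ext z
    exact congrArg₂
      (fun S (β : Δ[1].obj k') => β.down.toOrderHom.monotone.functor.prod' S ⋙ natTransCylinder η)
      (NatTrans.naturality_apply a σ z) (NatTrans.naturality_apply b σ z)

lemma comp_cylinderMap {X Y : SSet} (f : Y ⟶ X) (η : F ⟶ G) (a : X ⟶ nerve C) (b : X ⟶ Δ[1]) :
    f ≫ cylinderMap η a b = cylinderMap η (f ≫ a) (f ≫ b) := rfl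

lemma cylinderMap_id_constΔ1_zero (η : F ⟶ G) :
    cylinderMap η (𝟙 _) (constΔ1 _ 0) = nerveMap F := by
  ext k z
  exact Functor.const_prod'_comp_uncurry_obj (ComposableArrows.mk₁ η) 0 z

lemma cylinderMap_id_constΔ1_one (η : F ⟶ G) :
    cylinderMap η (𝟙 _) (constΔ1 _ 1) = nerveMap G := by
  ext k z
  exact Functor.const_prod'_comp_uncurry_obj (ComposableArrows.mk₁ η) 1 z

lemma htpyRel_nerveMap (η : F ⟶ G) : HtpyRel (nerve C) (nerve D) (nerveMap F) (nerveMap G) :=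
  ⟨cylinderMap η prod.fst prod.snd, by
    simp only [IsHomotopy, comp_cylinderMap, prod.lift_fst, prod.lift_snd]
    exact ⟨cylinderMap_id_constΔ1_zero η, cylinderMap_id_constΔ1_one η⟩⟩

end NerveHomotopy

namespace Fin

variable {k : ℕ} {α : Type*} [Preorder α]

def snocOrderHom (f : Fin (k + 1) →o α) (a : α) (ha : ∀ i, f i ≤ a) : Fin (k + 1 + 1) →o α :=
  ⟨Fin.snoc f a, by
    simpa only [Fin.insertNth_last'] using Fin.insertNth_last_monotone f.monotone a (ha _)⟩

@[simp]
lemma snocOrderHom_castSucc (f : Fin (k + 1) →o α) (a : α) (ha : ∀ i, f i ≤ a) (i : Fin (k + 1)) :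
    snocOrderHom f a ha i.castSucc = f i :=
  Fin.snoc_castSucc (α := fun _ => α) ..

@[simp]
lemma snocOrderHom_last (f : Fin (k + 1) →o α) (a : α) (ha : ∀ i, f i ≤ a) :
    snocOrderHom f a ha (Fin.last _) = a :=
  Fin.snoc_last (α := fun _ => α) ..

lemma strictMono_snocOrderHom {f : Fin (k + 1) →o α} (hf : StrictMono f) {a : α}
    (ha : ∀ i, f i ≤ a) (ha' : ∀ i, f i < a) : StrictMono (snocOrderHom f a ha) := by
  change StrictMono (Fin.snoc (α := fun _ => α) f a)
  simpa only [Fin.insertNth_last'] using Fin.strictMono_insertNth_last hf a (ha' _)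

end Fin

namespace DObj

variable {n : ℕ}

@[ext]
lemma hom_ext {x y : DObj n} {g h : x ⟶ y} (H : ∀ i, g.f i = h.f i) : g = h :=
  DHom.ext (OrderHom.ext _ _ (funext H))

@[simp]
lemma id_f (x : DObj n) : (𝟙 x : DHom x x).f = OrderHom.id := rfl

@[simp]
lemma comp_f {x y z : DObj n} (g : x ⟶ y) (h : y ⟶ z) : (g ≫ h : DHom x z).f = h.f.comp g.f := rfl

def segment (j : Fin (n + 1)) : DObj n :=
  ⟨j, (Fin.castLEOrderEmb (Nat.succ_le_succ j.is_le)).toOrderHom⟩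

def segmentHom {i j : Fin (n + 1)} (h : i ≤ j) : segment i ⟶ segment j :=
  ⟨(Fin.castLEOrderEmb (Nat.succ_le_succ h)).toOrderHom,
    (Fin.castLEOrderEmb (Nat.succ_le_succ h)).injective, rfl⟩

abbrev cone (x : DObj n) : DObj n :=
  ⟨x.k + 1, Fin.snocOrderHom x.φ (Fin.last n) fun _ => Fin.le_last _⟩

def apex (n : ℕ) : DObj n :=
  ⟨0, OrderHom.const _ (Fin.last n)⟩

end DObj

namespace DHom

variable {n : ℕ} {x y : DObj n}

def cone (g : x ⟶ y) : x.cone ⟶ y.cone where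
  f := Fin.snocOrderHom (Fin.castSuccOrderEmb.toOrderHom.comp g.f) (Fin.last _)
    fun _ => Fin.le_last _
  inj := (Fin.strictMono_snocOrderHom
    (Fin.strictMono_castSucc.comp (g.f.monotone.strictMono_of_injective g.inj)) _
    fun _ => Fin.castSucc_lt_last _).injective
  comm := by
    ext i : 2
    induction i using Fin.lastCases with
    | last => simp
    | cast i => simpa using DFunLike.congr_fun g.comm i

@[simp]
lemma cone_f_castSucc (g : x ⟶ y) (i : Fin (x.k + 1)) : g.cone.f i.castSucc = (g.f i).castSucc := by
  simp [cone]

@[simp]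
lemma cone_f_last (g : x ⟶ y) : g.cone.f (Fin.last (x.k + 1)) = Fin.last (y.k + 1) := by
  simp [cone]

end DHom

section

variable (n : ℕ)

def pFunctor : DObj n ⥤ Fin (n + 1) where
  obj := pObj
  map g := homOfLE (pObj_le g)

def segmentFunctor : Fin (n + 1) ⥤ DObj n where
  obj := DObj.segment
  map h := DObj.segmentHom (leOfHom h)
  map_id _ := rfl
  map_comp _ _ := rfl

/-- The nerve of `segmentFunctor n`, read through `N [n] = Δ[n]`. -/
def segmentMap : Δ[n] ⟶ nerve (DObj n) :=
  SSet.yonedaEquiv.symm (segmentFunctor n)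

lemma segmentMap_comp_Np : segmentMap n ≫ Np n = 𝟙 Δ[n] := by
  apply SSet.yonedaEquiv.injective
  rw [SSet.yonedaEquiv_comp]
  ext i
  rfl

lemma Np_comp_segmentMap : Np n ≫ segmentMap n = nerveMap (pFunctor n ⋙ segmentFunctor n) := by
  ext k S
  rfl

def coneFunctor : DObj n ⥤ DObj n where
  obj := DObj.cone
  map := DHom.cone
  map_id x := by
    ext i : 1
    induction i using Fin.lastCases <;> simp
  map_comp g h := by
    ext i : 1
    induction i using Fin.lastCases <;> simp

def toCone : 𝟭 (DObj n) ⟶ coneFunctor n where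
  app x := ⟨Fin.castSuccOrderEmb.toOrderHom, Fin.castSucc_injective _,
    OrderHom.ext _ _ (funext fun i => Fin.snoc_castSucc (α := fun _ => Fin (n + 1)) ..)⟩
  naturality x y g := by
    ext i : 1
    exact (DHom.cone_f_castSucc g i).symm

def apexToCone : (Functor.const (DObj n)).obj (DObj.apex n) ⟶ coneFunctor n where
  app x := ⟨OrderHom.const _ (Fin.last _), fun _ _ _ => Subsingleton.elim (α := Fin 1) _ _,
    OrderHom.ext _ _ (funext fun _ => Fin.snoc_last (α := fun _ => Fin (n + 1)) ..)⟩
  naturality x y g := by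
    ext i : 1
    exact (DHom.cone_f_last g).symm

def apexToTop : DObj.apex n ⟶ DObj.segment (Fin.last n) :=
  ⟨OrderHom.const _ (Fin.last n), fun _ _ _ => Subsingleton.elim (α := Fin 1) _ _, rfl⟩

def segmentToTop :
    pFunctor n ⋙ segmentFunctor n ⟶ (Functor.const (DObj n)).obj (DObj.segment (Fin.last n)) where
  app x := DObj.segmentHom (Fin.le_last (pObj x))

end

local notation:50 f " ≃ₕ " g => Relation.EqvGen (HtpyRel _ _) f g

/-- for every `m`, the map `N p : N D[m] ⟶ Δ[m]` induced by the functor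
`p : D[m] → [m]` is a simplicial homotopy equivalence: there is `g : Δ[m] ⟶ N D[m]` such
that `N p ∘ g` is homotopic to the identity of `Δ[m]` and `g ∘ N p` is homotopic to the
identity of `N D[m]`, where "homotopic" is the equivalence relation generated by
`Δ[1]`-homotopies. -/
theorem Np_homotopy_equivalence (m : ℕ) :
    ∃ g : Δ[m] ⟶ (nerve (DObj m) : SSet),
      Relation.EqvGen (HtpyRel Δ[m] Δ[m]) (g ≫ Np m) (𝟙 Δ[m]) ∧
      Relation.EqvGen (HtpyRel (nerve (DObj m)) (nerve (DObj m))) (Np m ≫ g)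
        (𝟙 (nerve (DObj m) : SSet)) := by
  refine ⟨segmentMap m, segmentMap_comp_Np m ▸ .refl _, ?_⟩
  rw [Np_comp_segmentMap]
  calc nerveMap (pFunctor m ⋙ segmentFunctor m)
      ≃ₕ nerveMap ((Functor.const _).obj (DObj.segment (Fin.last m))) :=
        .rel _ _ (htpyRel_nerveMap (segmentToTop m))
    _ ≃ₕ nerveMap ((Functor.const _).obj (DObj.apex m)) :=
        .symm _ _ (.rel _ _ (htpyRel_nerveMap ((Functor.const _).map (apexToTop m))))
    _ ≃ₕ nerveMap (coneFunctor m) := .rel _ _ (htpyRel_nerveMap (apexToCone m))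
    _ ≃ₕ nerveMap (𝟭 _) := .symm _ _ (.rel _ _ (htpyRel_nerveMap (toCone m)))

end
end

section
/- Let A be a finite linearly ordered set with greatest element p. Let Y be the poset, ordered by inclusion, of those nonempty subsets B ⊆ A for which there exists a subset C ⊆ A with B ⊆ C, C ≠ A, and p ∈ C; and let X be the subposet of Y consisting of those nonempty subsets B ⊆ A with B ≠ A and p ∈ B. Then the inclusion functor X → Y (of posets regarded as categories) is a final functor. -/
open CategoryTheory

/-- For a linearly ordered set `α` with a distinguished element `p`:
the poset (under inclusion) of nonempty proper subsets of `α` containing `p`.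
(This is the latching category `∂(max⁻¹{p} ↓ A)` of the paper, described on subsets.) -/
abbrev LatchSub (α : Type) (p : α) : Type :=
  {B : Set α // B.Nonempty ∧ B ≠ Set.univ ∧ p ∈ B}

/-- The poset (under inclusion) of nonempty subsets `B` of `α` for which there is a subset
`C ⊇ B` with `C ≠ α` and `p ∈ C`. (This is the sieve `L` of the paper.) -/
abbrev LatchAmb (α : Type) (p : α) : Type :=
  {B : Set α // B.Nonempty ∧ ∃ C : Set α, B ⊆ C ∧ C ≠ Set.univ ∧ p ∈ C}

/-- The inclusion functor of the poset of nonempty proper subsets containing `p` into the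
poset of nonempty subsets admitting a proper superset containing `p`. -/
noncomputable def latchIncl (α : Type) (p : α) : LatchSub α p ⥤ LatchAmb α p :=
  Monotone.functor
    (f := fun B => ⟨B.1, B.2.1, B.1, le_refl _, B.2.2.1, B.2.2.2⟩)
    (fun _ _ h => h)

/-- for a linearly ordered set `A` (here `α`) with greatest element
`p`, the inclusion of the poset of nonempty proper subsets containing `p` into the poset of
nonempty subsets admitting a proper superset containing `p` is a final (cofinal) functor. -/
theorem latchIncl_final (α : Type) [LinearOrder α] [Fintype α]
    (p : α) (hp : ∀ a : α, a ≤ p) :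
    (latchIncl α p).Final := by
  constructor
  intro d
  obtain ⟨B, hBne, C, hBC, hCuniv, hpC⟩ := d
  -- the least element of the comma category: `B ∪ {p}`
  have hsub : B ∪ {p} ⊆ C := by
    intro x hx
    rcases hx with hx | hx
    · exact hBC hx
    · rcases hx with rfl; exact hpC
  have hne : B ∪ {p} ≠ Set.univ := by
    intro h
    exact hCuniv (Set.eq_univ_of_univ_subset (h ▸ hsub))
  let x₀ : LatchSub α p := ⟨B ∪ {p}, hBne.mono Set.subset_union_left, hne,
    Or.inr rfl⟩
  let d : LatchAmb α p := ⟨B, hBne, C, hBC, hCuniv, hpC⟩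
  let j₀ : CategoryTheory.StructuredArrow d (latchIncl α p) :=
    CategoryTheory.StructuredArrow.mk (Y := x₀)
      (homOfLE (Set.subset_union_left : B ≤ B ∪ {p}))
  have key : ∀ j : CategoryTheory.StructuredArrow d (latchIncl α p), j₀ ⟶ j := by
    intro j
    refine CategoryTheory.StructuredArrow.homMk ?_ ?_
    · refine homOfLE ?_
      have hBj : B ⊆ j.right.1 := leOfHom j.hom
      intro x hx
      rcases hx with hx | hx
      · exact hBj hx
      · rcases hx with rfl; exact j.right.2.2.2
    · apply Subsingleton.elim
  have : Nonempty (CategoryTheory.StructuredArrow d (latchIncl α p)) := ⟨j₀⟩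
  apply zigzag_isConnected
  intro j₁ j₂
  exact Relation.ReflTransGen.trans
    (Relation.ReflTransGen.single (Or.inr ⟨key j₁⟩))
    (Relation.ReflTransGen.single (Or.inl ⟨key j₂⟩))
end

section
/- Let α be a type. Let Y be the poset of pairs (A, B) of nonempty subsets of α with A ∪ B ≠ α, ordered by componentwise inclusion, and let X be the poset of nonempty proper subsets of α, ordered by inclusion. Then the diagonal functor X → Y sending A to (A, A) is a final functor; moreover, for each (A, B) in Y, the comma category (A, B) ↓ X has an initial object, given by the pair (A ∪ B, A ∪ B). -/
open CategoryTheory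

/-- The poset (under inclusion) of nonempty proper subsets of `α`. -/
abbrev NPSub (α : Type) : Type :=
  {A : Set α // A.Nonempty ∧ A ≠ Set.univ}

/-- The poset (under componentwise inclusion) of pairs `(A, B)` of nonempty subsets of `α`
with `A ∪ B ≠ α`. -/
abbrev NPPair (α : Type) : Type :=
  {q : Set α × Set α // q.1.Nonempty ∧ q.2.Nonempty ∧ q.1 ∪ q.2 ≠ Set.univ}

/-- The diagonal functor `A ↦ (A, A)` from the poset of nonempty proper subsets of `α` to
the poset of pairs of nonempty subsets whose union is proper. -/
noncomputable def diagSub (α : Type) : NPSub α ⥤ NPPair α :=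
  Monotone.functor
    (f := fun A => ⟨(A.1, A.1), A.2.1, A.2.1, by rw [Set.union_self]; exact A.2.2⟩)
    (fun _ _ h => ⟨h, h⟩)

/-- The object `(A ∪ B, A ∪ B)` of the comma category `(A, B) ↓ diagSub α`,
for a pair `q = (A, B)` in `NPPair α`. -/
noncomputable def diagSubUnion (α : Type) (q : NPPair α) : StructuredArrow q (diagSub α) :=
  StructuredArrow.mk
    (Y := (⟨q.1.1 ∪ q.1.2, q.2.1.inl, q.2.2.2⟩ : NPSub α))
    (homOfLE (by exact ⟨Set.subset_union_left, Set.subset_union_right⟩))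

/-- Auxiliary: a morphism from `diagSubUnion α q` to any object of the comma category. -/
noncomputable def diagSub_hom (α : Type) (q : NPPair α) (j : StructuredArrow q (diagSub α)) :
    (diagSubUnion α q) ⟶ j := by
  refine StructuredArrow.homMk (homOfLE ?_) (by subsingleton)
  have h := leOfHom j.hom
  exact Set.union_subset h.1 h.2

/-- the diagonal functor `A ↦ (A, A)` from the poset of nonempty proper
subsets of `α` to the poset of pairs `(A, B)` of nonempty subsets with `A ∪ B ≠ α` is a
final (cofinal) functor; moreover, for each such pair `(A, B)`, the comma category
`(A, B) ↓ diagSub α` has an initial object, given by the pair `(A ∪ B, A ∪ B)`. -/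
theorem diagSub_final_and_initial (α : Type) :
    (diagSub α).Final ∧
      ∀ q : NPPair α, Nonempty (Limits.IsInitial (diagSubUnion α q)) := by
  have hinit : ∀ q : NPPair α, Nonempty (Limits.IsInitial (diagSubUnion α q)) := fun q =>
    ⟨Limits.IsInitial.ofUniqueHom (diagSub_hom α q)
      (fun j m => StructuredArrow.hom_ext _ _ (Subsingleton.elim _ _))⟩
  refine ⟨⟨fun q => ?_⟩, hinit⟩
  have : Nonempty (StructuredArrow q (diagSub α)) := ⟨diagSubUnion α q⟩
  exact zigzag_isConnected fun j₁ j₂ =>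
    (Zigzag.of_inv (diagSub_hom α q j₁)).trans (Zigzag.of_hom (diagSub_hom α q j₂))
end
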